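/- A numerical semigroup S is almost symmetric if and only if M − e is a canonical ideal of the numerical semigroup M − M. -/

import Mathlib

open Set Pointwise

def IsNumSgrp (S : Set ℤ) : Prop :=
  0 ∈ S ∧ (∀ a ∈ S, ∀ b ∈ S, a + b ∈ S) ∧ (∀ a ∈ S, 0 ≤ a) ∧ ∃ c : ℤ, ∀ z, c ≤ z → z ∈ S

def maxId (S : Set ℤ) : Set ℤ := S \ {0}

def subI (I J : Set ℤ) : Set ℤ := {x : ℤ | ∀ j ∈ J, x + j ∈ I}

def PF (S I : Set ℤ) : Set ℤ := subI I (maxId S) \ I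

def stdK (S : Set ℤ) (F : ℤ) : Set ℤ := {x : ℤ | 0 ≤ x ∧ F - x ∉ S}

def IsFrobOf (I : Set ℤ) (FI : ℤ) : Prop := FI ∉ I ∧ ∀ z : ℤ, FI < z → z ∈ I

def IsRelIdeal (S I : Set ℤ) : Prop :=
  I.Nonempty ∧ (∀ i ∈ I, ∀ s ∈ S, i + s ∈ I) ∧ ∃ z ∈ S, ∀ i ∈ I, z + i ∈ S

def tilde (I : Set ℤ) (d : ℤ) : Set ℤ := (fun x => x + d) '' I

def IsAlmostCanonical (S : Set ℤ) (F : ℤ) (I : Set ℤ) : Prop :=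
  ∃ FI : ℤ, IsFrobOf I FI ∧ subI (tilde I (F - FI)) (maxId S) = stdK S F ∪ {F}

def IsMinGen (S : Set ℤ) (x : ℤ) : Prop := x ∈ maxId S \ (maxId S + maxId S)

def IsMult (S : Set ℤ) (e : ℤ) : Prop := e ∈ maxId S ∧ ∀ m ∈ maxId S, e ≤ m

def genK (S : Set ℤ) (F : ℤ) : Set ℤ := (AddSubmonoid.closure (stdK S F) : Set ℤ)

def nK (K : Set ℤ) : ℕ → Set ℤ
  | 0 => {0}
  | 1 => K
  | n + 2 => nK K (n + 1) + K

def IsGAS (S : Set ℤ) (F : ℤ) : Prop :=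
  stdK S F + stdK S F = stdK S F ∨
  ∃ X : Finset ℤ, (∀ x ∈ X, IsMinGen S x) ∧ (∀ x ∈ X, ∀ y ∈ X, x - y ∉ PF S S) ∧
    (stdK S F + stdK S F) \ stdK S F = (fun x => F - x) '' (X : Set ℤ) ∪ {F}

def IsAlmostSym (S : Set ℤ) (F : ℤ) : Prop := subI S (maxId S) = stdK S F ∪ {F}

def apery (I : Set ℤ) (e : ℤ) : Set ℤ := {i ∈ I | i - e ∉ I}

/-!
Let `M` be the maximal ideal, `T = M - M` and `K` the canonical ideal of `S`. Since `e` is the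
least element of `M`, the Frobenius number of `T` is `F - e` and `M - e ⊆ K(T)`. Both sets have
least element `0`, so `M - e` is a translate of `K(T)` only if `M - e = K(T)`, i.e. only if
`K(T) ⊆ M - e`. The substitution `y = F - e - x` turns this inclusion into `F - y ∉ S → y ∈ T`,
i.e. `K ⊆ T`. On nonnegative integers membership in `T` and in `S - M` agree, and
`S - M ⊆ K ∪ {F}` always holds, so `K ⊆ T` is exactly almost symmetry.
-/

theorem IsFrobOf.unique {I : Set ℤ} {a b : ℤ} (ha : IsFrobOf I a) (hb : IsFrobOf I b) :
    a = b := by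
  by_contra hne
  rcases lt_or_gt_of_ne hne with h | h
  · exact hb.1 (ha.2 b h)
  · exact ha.1 (hb.2 a h)

theorem mem_stdK_iff {I : Set ℤ} {F x : ℤ} (hF : IsFrobOf I F) : x ∈ stdK I F ↔ F - x ∉ I :=
  ⟨And.right, fun hx => ⟨by linarith [not_lt.1 (mt (hF.2 _) hx)], hx⟩⟩

theorem isLeast_stdK {I : Set ℤ} {F : ℤ} (hF : F ∉ I) : IsLeast (stdK I F) 0 :=
  ⟨⟨le_rfl, by rwa [sub_zero]⟩, fun _ hx => hx.1⟩

theorem mem_image_sub_const_iff {A : Set ℤ} {e x : ℤ} :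
    x ∈ (fun a => a - e) '' A ↔ x + e ∈ A :=
  ⟨by rintro ⟨a, ha, rfl⟩; simpa using ha, fun h => ⟨x + e, h, add_sub_cancel_right x e⟩⟩

theorem eq_zero_of_image_add_eq {A B : Set ℤ} {c : ℤ} (hA : IsLeast A 0) (hB : IsLeast B 0)
    (h : (fun k => c + k) '' B = A) : c = 0 := by
  have hc : IsLeast ((fun k => c + k) '' B) (c + 0) := (add_right_mono (a := c)).map_isLeast hB
  simpa [h] using hc.unique (h ▸ hA)

section NumericalSemigroup

variable {S : Set ℤ} {F e : ℤ}

theorem pos_of_mem_maxId (hS : ∀ a ∈ S, 0 ≤ a) {m : ℤ} (hm : m ∈ maxId S) : 0 < m :=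
  lt_of_le_of_ne (hS m hm.1) (Ne.symm hm.2)

theorem isFrobOf_subI_maxId (hF : IsFrobOf S F) (hF0 : 0 ≤ F) (he : IsMult S e) :
    IsFrobOf (subI (maxId S) (maxId S)) (F - e) := by
  refine ⟨fun h => hF.1 (by simpa using (h e he.1).1), fun z hz m hm => ?_⟩
  have hzm : F < z + m := by linarith [he.2 m hm]
  exact ⟨hF.2 _ hzm, (by linarith : 0 < z + m).ne'⟩

theorem mem_subI_maxId_iff_of_nonneg (hS : ∀ a ∈ S, 0 ≤ a) {y : ℤ} (hy : 0 ≤ y) :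
    y ∈ subI (maxId S) (maxId S) ↔ y ∈ subI S (maxId S) := by
  refine ⟨fun h m hm => (h m hm).1, fun h m hm => ⟨h m hm, ?_⟩⟩
  exact (add_pos_of_nonneg_of_pos hy (pos_of_mem_maxId hS hm)).ne'

theorem stdK_subset_subI_maxId_iff (hS : ∀ a ∈ S, 0 ≤ a) :
    stdK S F ⊆ subI (maxId S) (maxId S) ↔ stdK S F ⊆ subI S (maxId S) :=
  forall₂_congr fun _ hx => mem_subI_maxId_iff_of_nonneg hS hx.1

theorem subI_maxId_subset (hF : IsFrobOf S F) : subI S (maxId S) ⊆ stdK S F ∪ {F} := by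
  intro x hx
  by_cases hxF : x = F
  · exact Or.inr hxF
  refine Or.inl ((mem_stdK_iff hF).2 fun hFx => hF.1 ?_)
  simpa using hx _ ⟨hFx, sub_ne_zero.2 (Ne.symm hxF)⟩

theorem frob_mem_subI_maxId (hS : ∀ a ∈ S, 0 ≤ a) (hF : IsFrobOf S F) :
    F ∈ subI S (maxId S) :=
  fun _ hm => hF.2 _ (lt_add_of_pos_right F (pos_of_mem_maxId hS hm))

theorem isAlmostSym_iff (hS : ∀ a ∈ S, 0 ≤ a) (hF : IsFrobOf S F) :
    IsAlmostSym S F ↔ stdK S F ⊆ subI S (maxId S) := by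
  refine ⟨fun h => h ▸ subset_union_left, fun h => (subI_maxId_subset hF).antisymm ?_⟩
  exact union_subset h (singleton_subset_iff.2 (frob_mem_subI_maxId hS hF))

theorem isLeast_image_sub_maxId (he : IsMult S e) :
    IsLeast ((fun m => m - e) '' maxId S) 0 := by
  refine ⟨⟨e, he.1, sub_self e⟩, ?_⟩
  rintro _ ⟨m, hm, rfl⟩
  exact sub_nonneg.2 (he.2 m hm)

theorem image_sub_subset_stdK_subI (hT : IsFrobOf (subI (maxId S) (maxId S)) (F - e))
    (hF : F ∉ S) : (fun m => m - e) '' maxId S ⊆ stdK (subI (maxId S) (maxId S)) (F - e) := by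
  rintro _ ⟨m, hm, rfl⟩
  refine (mem_stdK_iff hT).2 fun h => hF ?_
  simpa using (h m hm).1

theorem stdK_subset_subI_maxId_iff_stdK_subI_subset (hF : IsFrobOf S F) (he : 0 < e)
    (hT : IsFrobOf (subI (maxId S) (maxId S)) (F - e)) :
    stdK S F ⊆ subI (maxId S) (maxId S) ↔
      stdK (subI (maxId S) (maxId S)) (F - e) ⊆ (fun m => m - e) '' maxId S := by
  simp only [subset_def, mem_stdK_iff hF, mem_stdK_iff hT, mem_image_sub_const_iff]
  constructor
  · intro h x hx
    by_contra hxe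
    have hx0 : x + e ≠ 0 := fun h0 => hx (hT.2 _ (by linarith))
    refine hx (h _ fun hxS => hxe ⟨?_, hx0⟩)
    rwa [show F - (F - e - x) = x + e by ring] at hxS
  · intro h y hy
    by_contra hyT
    have hFy := (h (F - e - y) (by rwa [sub_sub_cancel])).1
    rw [sub_right_comm, sub_add_cancel] at hFy
    exact hy hFy

end NumericalSemigroup

theorem stmt17 (S : Set ℤ) (hS : IsNumSgrp S) (F e : ℤ) (hF : IsFrobOf S F) (hFpos : 0 < F)
    (he : IsMult S e) (FMM : ℤ) (hFMM : IsFrobOf (subI (maxId S) (maxId S)) FMM) :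
    IsAlmostSym S F ↔
      ∃ c : ℤ, (fun m => m - e) '' maxId S =
        (fun k => c + k) '' stdK (subI (maxId S) (maxId S)) FMM := by
  obtain ⟨-, -, hS0, -⟩ := hS
  have hT := isFrobOf_subI_maxId hF hFpos.le he
  obtain rfl := hFMM.unique hT
  have hMe := image_sub_subset_stdK_subI hT hF.1
  rw [isAlmostSym_iff hS0 hF, ← stdK_subset_subI_maxId_iff hS0,
    stdK_subset_subI_maxId_iff_stdK_subI_subset hF (pos_of_mem_maxId hS0 he.1) hT]
  constructor
  · exact fun h => ⟨0, by simpa using hMe.antisymm h⟩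
  · rintro ⟨c, hc⟩
    obtain rfl := eq_zero_of_image_add_eq (isLeast_image_sub_maxId he) (isLeast_stdK hT.1) hc.symm
    simp only [zero_add, image_id'] at hc
    exact hc.ge
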